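/- Let p and q be powers of 2 with q ≤ p^{2m}, let n = (p^{2m}−1)/(p−1), and let C ⊆ F_p^n be an additive code (a subgroup of (F_p^n, +)) that is completely regular with covering radius 3 and intersection array {p^{2m}−1, p^{2m}−q, 1; 1, q, p^{2m}−1}. Then for every integer k with 1 ≤ k ≤ p^{2m}/q − 1 there exists a set B_k ⊆ F_p^n that is a union of exactly k cosets of C and is completely regular with covering radius 3 and intersection array {p^{2m}−1, p^{2m}−kq, 1; 1, kq, p^{2m}−1}. -/
import Mathlib


open Finset

/-- Hamming distance from a word to a code. -/
noncomputable def distToCode {F ι : Type*} [Fintype ι] [DecidableEq F]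
    (C : Set (ι → F)) (x : ι → F) : ℕ :=
  sInf {d | ∃ c ∈ C, hammingDist x c = d}

/-- A code is completely regular with covering radius `ρ` and intersection array
`{b 0, …, b (ρ-1); c 1, …, c ρ}`. -/
def IsCompletelyRegular {F ι : Type*} [Fintype ι] [DecidableEq F]
    (C : Set (ι → F)) (ρ : ℕ) (b c : ℕ → ℕ) : Prop :=
  (∀ x, distToCode C x ≤ ρ) ∧ (∃ x, distToCode C x = ρ) ∧
    ∀ i ≤ ρ, ∀ x, distToCode C x = i →
      (i < ρ → {y | hammingDist x y = 1 ∧ distToCode C y = i + 1}.ncard = b i) ∧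
      (1 ≤ i → {y | hammingDist x y = 1 ∧ distToCode C y = i - 1}.ncard = c i)

section Basic

variable {F ι : Type*} [Fintype ι] [DecidableEq F] {C : Set (ι → F)}

lemma dtc_set_nonempty (hC : C.Nonempty) (x : ι → F) :
    {d | ∃ c ∈ C, hammingDist x c = d}.Nonempty := by
  obtain ⟨c, hc⟩ := hC
  exact ⟨hammingDist x c, c, hc, rfl⟩

lemma dtc_exists (hC : C.Nonempty) (x : ι → F) :
    ∃ c ∈ C, hammingDist x c = distToCode C x :=
  Nat.sInf_mem (dtc_set_nonempty hC x)

lemma dtc_le (x : ι → F) {c : ι → F} (hc : c ∈ C) : distToCode C x ≤ hammingDist x c :=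
  Nat.sInf_le ⟨c, hc, rfl⟩

lemma dtc_le_iff (hC : C.Nonempty) {x : ι → F} {t : ℕ} :
    distToCode C x ≤ t ↔ ∃ c ∈ C, hammingDist x c ≤ t := by
  constructor
  · intro h
    obtain ⟨c, hc, hd⟩ := dtc_exists hC x
    exact ⟨c, hc, hd.le.trans h⟩
  · rintro ⟨c, hc, hd⟩
    exact (dtc_le x hc).trans hd

lemma dtc_eq_zero_iff (hC : C.Nonempty) (x : ι → F) : distToCode C x = 0 ↔ x ∈ C := by
  constructor
  · intro h
    rcases (Nat.sInf_eq_zero.mp h) with h0 | hemp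
    · obtain ⟨c, hc, hd⟩ := h0
      rwa [eq_of_hammingDist_eq_zero hd]
    · exact absurd hemp (dtc_set_nonempty hC x).ne_empty
  · intro h
    exact Nat.le_zero.mp (by simpa using dtc_le x h)

lemma dtc_lipschitz (hC : C.Nonempty) (x y : ι → F) :
    distToCode C y ≤ distToCode C x + hammingDist x y := by
  obtain ⟨c, hc, hd⟩ := dtc_exists hC x
  calc distToCode C y ≤ hammingDist y c := dtc_le y hc
    _ ≤ hammingDist y x + hammingDist x c := hammingDist_triangle y x c
    _ = distToCode C x + hammingDist x y := by rw [hammingDist_comm, hd, add_comm]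

end Basic

section Group

variable {F ι : Type*} [Fintype ι] [DecidableEq F] [AddCommGroup F]

lemma hammingDist_add_right (x y z : ι → F) :
    hammingDist (x + z) (y + z) = hammingDist x y := by
  simp only [hammingDist]
  congr 1
  ext i
  simp [add_left_inj]

lemma hammingDist_sub_right (x y z : ι → F) :
    hammingDist (x - z) (y - z) = hammingDist x y := by
  simpa [sub_eq_add_neg] using hammingDist_add_right x y (-z)

lemma hammingDist_neg (x y : ι → F) : hammingDist (-x) (-y) = hammingDist x y := by
  simp only [hammingDist]
  congr 1
  ext i
  simp [neg_inj]

variable (C : AddSubgroup (ι → F))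

lemma dtc_shift {c : ι → F} (hc : c ∈ C) (x : ι → F) :
    distToCode (C : Set (ι → F)) (x + c) = distToCode (C : Set (ι → F)) x := by
  unfold distToCode
  congr 1
  ext d
  constructor
  · rintro ⟨c', hc', rfl⟩
    refine ⟨c' - c, by exact sub_mem hc' hc, ?_⟩
    rw [← hammingDist_add_right x (c' - c) c, sub_add_cancel]
  · rintro ⟨c', hc', rfl⟩
    exact ⟨c' + c, by exact add_mem hc' hc, by rw [hammingDist_add_right]⟩

lemma dtc_neg' (x : ι → F) :
    distToCode (C : Set (ι → F)) (-x) = distToCode (C : Set (ι → F)) x := by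
  unfold distToCode
  congr 1
  ext d
  constructor
  · rintro ⟨c', hc', rfl⟩
    refine ⟨-c', by exact neg_mem hc', ?_⟩
    rw [← hammingDist_neg x (-c'), neg_neg]
  · rintro ⟨c', hc', rfl⟩
    exact ⟨-c', by exact neg_mem hc', by rw [hammingDist_neg]⟩

lemma dtc_congr {x y : ι → F} (h : x - y ∈ C) :
    distToCode (C : Set (ι → F)) x = distToCode (C : Set (ι → F)) y := by
  have := dtc_shift C h y
  rwa [show y + (x - y) = x by abel] at this

end Group

section Helpers

variable {F ι : Type*} [Fintype ι] [DecidableEq ι] [DecidableEq F]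

/-- decompose a distance-2 pair through a middle point -/
lemma exists_mid {u w : ι → F} (h : hammingDist u w = 2) :
    ∃ z, hammingDist u z = 1 ∧ hammingDist z w = 1 := by
  classical
  have hcard : ({i | u i ≠ w i} : Finset ι).card = 2 := h
  obtain ⟨i, hi⟩ : ∃ i, u i ≠ w i := by
    by_contra hno
    push_neg at hno
    have : ({i | u i ≠ w i} : Finset ι) = ∅ := by
      ext j; simp [hno j]
    rw [this] at hcard; simp at hcard
  refine ⟨Function.update u i (w i), ?_, ?_⟩
  · show ({j | u j ≠ Function.update u i (w i) j} : Finset ι).card = 1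
    have : ({j | u j ≠ Function.update u i (w i) j} : Finset ι) = {i} := by
      ext j
      by_cases hij : j = i
      · subst hij; simp [Function.update_self, hi]
      · simp [Function.update_of_ne hij, hij]
    rw [this]; simp
  · show ({j | Function.update u i (w i) j ≠ w j} : Finset ι).card = 1
    have hset : ({j | Function.update u i (w i) j ≠ w j} : Finset ι)
        = ({j | u j ≠ w j} : Finset ι).erase i := by
      ext j
      by_cases hij : j = i
      · subst hij; simp [Function.update_self]
      · simp [Function.update_of_ne hij, hij]
    rw [hset, Finset.card_erase_of_mem, hcard]
    simp [hi]
  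
/-- size of the Hamming sphere of radius 1 -/
lemma sphere_ncard [Fintype F] (x : ι → F) :
    {y | hammingDist x y = 1}.ncard = Fintype.card ι * (Fintype.card F - 1) := by
  classical
  set f : (Σ _i : ι, {a : F // a ≠ x _i}) → (ι → F) :=
    fun p => Function.update x p.1 p.2.1 with hf
  have hinj : Function.Injective f := by
    rintro ⟨i, a, ha⟩ ⟨j, b, hb⟩ hab
    simp only [hf] at hab
    by_cases hij : i = j
    · subst hij
      have := congrFun hab i
      simp only [Function.update_self] at this
      subst this; rfl
    · have h1 := congrFun hab i
      rw [Function.update_self, Function.update_of_ne (fun h => hij h)] at h1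
      exact absurd h1 ha
  have hrange : Set.range f = {y | hammingDist x y = 1} := by
    ext y
    constructor
    · rintro ⟨⟨i, a, ha⟩, rfl⟩
      show ({j | x j ≠ Function.update x i a j} : Finset ι).card = 1
      have : ({j | x j ≠ Function.update x i a j} : Finset ι) = {i} := by
        ext j
        by_cases hij : j = i
        · subst hij; simp [Function.update_self, Ne.symm ha]
        · simp [Function.update_of_ne hij, hij]
      rw [this]; simp
    · intro hy
      have hcard : ({j | x j ≠ y j} : Finset ι).card = 1 := hy
      obtain ⟨i, hi⟩ := Finset.card_eq_one.mp hcard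
      have hmemi : x i ≠ y i := by
        have : i ∈ ({j | x j ≠ y j} : Finset ι) := by rw [hi]; simp
        simpa using this
      refine ⟨⟨i, y i, Ne.symm hmemi⟩, ?_⟩
      funext j
      by_cases hij : j = i
      · subst hij; simp [hf, Function.update_self]
      · have : j ∉ ({j | x j ≠ y j} : Finset ι) := by rw [hi]; simp [hij]
        simp only [Finset.mem_filter, Finset.mem_univ, true_and, not_not] at this
        simp only [hf, Function.update_of_ne hij]
        exact this
  rw [← hrange]
  have h1 : (Set.range f).ncard = Nat.card (Σ _i : ι, {a : F // a ≠ x _i}) := by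
    rw [← Nat.card_coe_set_eq, Nat.card_range_of_injective hinj]
  rw [h1, Nat.card_eq_fintype_card, Fintype.card_sigma]
  have : ∀ i : ι, Fintype.card {a : F // a ≠ x i} = Fintype.card F - 1 := by
    intro i
    rw [Fintype.card_subtype_compl, Fintype.card_subtype_eq]
  simp only [this, Finset.sum_const, Finset.card_univ, smul_eq_mul]

/-- translation of a neighbourhood count -/
lemma ncard_shift {G : Type*} [Fintype ι] [DecidableEq G] [AddCommGroup G]
    (x r : ι → G) (P : (ι → G) → Prop) :
    {y | hammingDist x y = 1 ∧ P (y - r)}.ncard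
      = {z | hammingDist (x - r) z = 1 ∧ P z}.ncard := by
  have himg : {y | hammingDist x y = 1 ∧ P (y - r)}
      = (fun z => z + r) '' {z | hammingDist (x - r) z = 1 ∧ P z} := by
    ext y
    constructor
    · rintro ⟨h1, h2⟩
      exact ⟨y - r, ⟨by rwa [hammingDist_sub_right], h2⟩, sub_add_cancel y r⟩
    · rintro ⟨z, ⟨h1, h2⟩, rfl⟩
      constructor
      · rw [show x = (x - r) + r by abel, hammingDist_add_right]; exact h1
      · simpa using h2
  rw [himg, Set.ncard_image_of_injective _ (add_left_injective r)]

lemma ncard_biUnion_disjoint {α β : Type*} [Fintype β] (S : Finset α) (f : α → Set β)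
    (h : ∀ a ∈ S, ∀ b ∈ S, a ≠ b → Disjoint (f a) (f b)) :
    (⋃ i ∈ S, f i).ncard = ∑ i ∈ S, (f i).ncard := by
  classical
  induction S using Finset.induction_on with
  | empty => simp
  | @insert a S ha ih =>
    rw [Finset.sum_insert ha, Finset.set_biUnion_insert]
    rw [Set.ncard_union_eq ?_ (Set.toFinite _) (Set.toFinite _)]
    · rw [ih (fun a' ha' b hb hab => h a' (Finset.mem_insert_of_mem ha')
        b (Finset.mem_insert_of_mem hb) hab)]
    · rw [Set.disjoint_iUnion_right]
      intro i
      rw [Set.disjoint_iUnion_right]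
      intro hi
      exact h a (Finset.mem_insert_self a S) i (Finset.mem_insert_of_mem hi)
        (fun hai => ha (hai ▸ hi))

lemma ncard_biUnion_le {α β : Type*} [Fintype β] (S : Finset α) (f : α → Set β) :
    (⋃ i ∈ S, f i).ncard ≤ ∑ i ∈ S, (f i).ncard := by
  classical
  induction S using Finset.induction_on with
  | empty => simp
  | @insert a S ha ih =>
    rw [Finset.sum_insert ha, Finset.set_biUnion_insert]
    exact le_trans (Set.ncard_union_le _ _) (by omega)

end Helpers
section CR3

variable {F ι : Type*} [Fintype ι] [DecidableEq ι] [DecidableEq F] [Fintype F] [AddCommGroup F]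

/-- The facts we extract from complete regularity with intersection array
`{N-1, N-q, 1; 1, q, N-1}`. -/
structure CRFacts (C : AddSubgroup (ι → F)) (N q : ℕ) : Prop where
  hle : ∀ x, distToCode (C : Set (ι → F)) x ≤ 3
  hsph : ∀ x : ι → F, {y | hammingDist x y = 1}.ncard = N - 1
  hb0 : ∀ x, distToCode (C : Set (ι → F)) x = 0 →
    {y | hammingDist x y = 1 ∧ distToCode (C : Set (ι → F)) y = 1}.ncard = N - 1
  hb1 : ∀ x, distToCode (C : Set (ι → F)) x = 1 →
    {y | hammingDist x y = 1 ∧ distToCode (C : Set (ι → F)) y = 2}.ncard = N - q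
  hc1 : ∀ x, distToCode (C : Set (ι → F)) x = 1 →
    {y | hammingDist x y = 1 ∧ distToCode (C : Set (ι → F)) y = 0}.ncard = 1
  hb2 : ∀ x, distToCode (C : Set (ι → F)) x = 2 →
    {y | hammingDist x y = 1 ∧ distToCode (C : Set (ι → F)) y = 3}.ncard = 1
  hc2 : ∀ x, distToCode (C : Set (ι → F)) x = 2 →
    {y | hammingDist x y = 1 ∧ distToCode (C : Set (ι → F)) y = 1}.ncard = q
  hc3 : ∀ x, distToCode (C : Set (ι → F)) x = 3 →
    {y | hammingDist x y = 1 ∧ distToCode (C : Set (ι → F)) y = 2}.ncard = N - 1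
  hq2 : 2 ≤ q
  hqN : q + q ≤ N

variable {C : AddSubgroup (ι → F)} {N q : ℕ}

lemma CRFacts.cne (_h : CRFacts C N q) : (C : Set (ι → F)).Nonempty := ⟨0, zero_mem C⟩

/-- every neighbour of a point at distance 3 is at distance 2 -/
lemma CRFacts.factA (h : CRFacts C N q) {v w : ι → F}
    (hv : distToCode (C : Set (ι → F)) v = 3) (hw : hammingDist v w = 1) :
    distToCode (C : Set (ι → F)) w = 2 := by
  have hsub : {y | hammingDist v y = 1 ∧ distToCode (C : Set (ι → F)) y = 2}
      ⊆ {y | hammingDist v y = 1} := fun y hy => hy.1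
  have heq : {y | hammingDist v y = 1 ∧ distToCode (C : Set (ι → F)) y = 2}
      = {y | hammingDist v y = 1} := by
    apply Set.eq_of_subset_of_ncard_le hsub
    rw [h.hsph v, h.hc3 v hv]
  have : w ∈ {y | hammingDist v y = 1} := hw
  rw [← heq] at this
  exact this.2

/-- a point at distance 2 has a unique neighbour at distance 3 -/
lemma CRFacts.uniq3 (h : CRFacts C N q) {v w w' : ι → F}
    (hv : distToCode (C : Set (ι → F)) v = 2)
    (hw1 : hammingDist v w = 1) (hw3 : distToCode (C : Set (ι → F)) w = 3)
    (hw1' : hammingDist v w' = 1) (hw3' : distToCode (C : Set (ι → F)) w' = 3) :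
    w = w' := by
  obtain ⟨a, ha⟩ := Set.ncard_eq_one.mp (h.hb2 v hv)
  have h1 : w ∈ {y | hammingDist v y = 1 ∧ distToCode (C : Set (ι → F)) y = 3} :=
    ⟨hw1, hw3⟩
  have h2 : w' ∈ {y | hammingDist v y = 1 ∧ distToCode (C : Set (ι → F)) y = 3} :=
    ⟨hw1', hw3'⟩
  rw [ha] at h1 h2
  simp only [Set.mem_singleton_iff] at h1 h2
  exact h1.trans h2.symm

/-- antipodality -/
lemma CRFacts.antip (h : CRFacts C N q) {a b : ι → F}
    (ha : distToCode (C : Set (ι → F)) a = 3) (hb : distToCode (C : Set (ι → F)) b = 3) :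
    distToCode (C : Set (ι → F)) (a - b) = 0 ∨ distToCode (C : Set (ι → F)) (a - b) = 3 := by
  have hle3 := h.hle (a - b)
  have hcases : distToCode (C : Set (ι → F)) (a - b) = 0
      ∨ distToCode (C : Set (ι → F)) (a - b) = 1
      ∨ distToCode (C : Set (ι → F)) (a - b) = 2
      ∨ distToCode (C : Set (ι → F)) (a - b) = 3 := by omega
  rcases hcases with hab | hab | hab | hab
  · exact Or.inl hab
  · exfalso
    obtain ⟨c, hc, hdc⟩ := dtc_exists h.cne (a - b)
    rw [hab] at hdc
    have hDbc : distToCode (C : Set (ι → F)) (b + c) = 3 := by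
      rw [dtc_congr C (show (b + c) - b ∈ C by simpa using hc)]; exact hb
    have hdist : hammingDist (b + c) a = 1 := by
      rw [hammingDist_comm, show a = (a - b) + b by abel, show b + c = c + b by abel,
        hammingDist_add_right]
      exact hdc
    have := h.factA hDbc hdist
    rw [ha] at this; omega
  · exfalso
    obtain ⟨c, hc, hdc⟩ := dtc_exists h.cne (a - b)
    rw [hab] at hdc
    have hDbc : distToCode (C : Set (ι → F)) (b + c) = 3 := by
      rw [dtc_congr C (show (b + c) - b ∈ C by simpa using hc)]; exact hb
    have hdist : hammingDist (b + c) a = 2 := by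
      rw [hammingDist_comm, show a = (a - b) + b by abel, show b + c = c + b by abel,
        hammingDist_add_right]
      exact hdc
    obtain ⟨z, hz1, hz2⟩ := exists_mid hdist
    have hDz : distToCode (C : Set (ι → F)) z = 2 := h.factA hDbc hz1
    have hone : hammingDist z (b + c) = 1 := by rw [hammingDist_comm]; exact hz1
    have heq2 : a = b + c := h.uniq3 hDz hz2 ha hone hDbc
    have hmem : a - b ∈ C := by rw [heq2]; simpa using hc
    rw [(dtc_eq_zero_iff h.cne (a - b)).mpr hmem] at hab
    omega
  · exact Or.inr hab

/-- the matching property -/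
lemma CRFacts.match1 (h : CRFacts C N q) {x r r' : ι → F}
    (h1 : distToCode (C : Set (ι → F)) (x - r) = 1)
    (h3 : distToCode (C : Set (ι → F)) (r - r') = 3) :
    distToCode (C : Set (ι → F)) (x - r') = 2 := by
  obtain ⟨c, hc, hdc⟩ := dtc_exists h.cne (x - r)
  rw [h1] at hdc
  have hDw : distToCode (C : Set (ι → F)) (r + c - r') = 3 := by
    rw [dtc_congr C (show (r + c - r') - (r - r') ∈ C by simpa using hc)]
    exact h3
  have hdist : hammingDist (r + c - r') (x - r') = 1 := by
    rw [show r + c - r' = c + (r - r') by abel, show x - r' = (x - r) + (r - r') by abel,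
      hammingDist_add_right, hammingDist_comm]
    exact hdc
  exact h.factA hDw hdist

end CR3
section Profiles

variable {F ι : Type*} [Fintype ι] [DecidableEq ι] [DecidableEq F] [Fintype F] [AddCommGroup F]

def BSet (C : AddSubgroup (ι → F)) (R : Finset (ι → F)) : Set (ι → F) :=
  ⋃ x ∈ R, (fun v => x + v) '' (C : Set (ι → F))

variable {C : AddSubgroup (ι → F)} {N q : ℕ} {R : Finset (ι → F)}

lemma memB_iff {y : ι → F} : y ∈ BSet C R ↔ ∃ r ∈ R, y - r ∈ C := by
  simp only [BSet, Set.mem_iUnion, Set.mem_image]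
  constructor
  · rintro ⟨r, hr, c, hc, rfl⟩
    exact ⟨r, hr, by simpa using hc⟩
  · rintro ⟨r, hr, hc⟩
    exact ⟨r, hr, y - r, hc, by abel⟩

lemma BSet_nonempty (hRne : R.Nonempty) : (BSet C R).Nonempty := by
  obtain ⟨r, hr⟩ := hRne
  exact ⟨r, memB_iff.mpr ⟨r, hr, by simpa using zero_mem C⟩⟩

lemma DB_le_iff (hRne : R.Nonempty) {x : ι → F} {t : ℕ} :
    distToCode (BSet C R) x ≤ t ↔ ∃ r ∈ R, distToCode (C : Set (ι → F)) (x - r) ≤ t := by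
  rw [dtc_le_iff (BSet_nonempty hRne)]
  constructor
  · rintro ⟨cB, hcB, hd⟩
    obtain ⟨r, hr, hc⟩ := memB_iff.mp hcB
    refine ⟨r, hr, (dtc_le_iff ⟨0, zero_mem C⟩).mpr ⟨cB - r, hc, ?_⟩⟩
    rwa [hammingDist_sub_right]
  · rintro ⟨r, hr, hle⟩
    obtain ⟨c, hc, hd⟩ := (dtc_le_iff (⟨0, zero_mem C⟩ : (C : Set (ι → F)).Nonempty)).mp hle
    refine ⟨r + c, memB_iff.mpr ⟨r, hr, by simpa using hc⟩, ?_⟩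
    rwa [show r + c = c + r by abel, show x = (x - r) + r by abel, hammingDist_add_right]

lemma DB_eq (hRne : R.Nonempty) {x : ι → F} {i : ℕ}
    (h1 : ∃ r ∈ R, distToCode (C : Set (ι → F)) (x - r) = i)
    (h2 : ∀ r ∈ R, i ≤ distToCode (C : Set (ι → F)) (x - r)) :
    distToCode (BSet C R) x = i := by
  obtain ⟨r, hr, hri⟩ := h1
  apply le_antisymm
  · exact (DB_le_iff hRne).mpr ⟨r, hr, hri.le⟩
  · obtain ⟨r', hr', hle⟩ := (DB_le_iff hRne).mp (le_refl (distToCode (BSet C R) x))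
    exact le_trans (h2 r' hr') hle

/-- the four possible profiles of distances from a word to the chosen cosets -/
lemma profile (h : CRFacts C N q)
    (hR3 : ∀ r ∈ R, ∀ r' ∈ R, r ≠ r' → distToCode (C : Set (ι → F)) (r - r') = 3)
    (x : ι → F) :
    (∃ r ∈ R, distToCode (C : Set (ι → F)) (x - r) = 0
        ∧ ∀ r' ∈ R, r' ≠ r → distToCode (C : Set (ι → F)) (x - r') = 3)
    ∨ (∃ r ∈ R, distToCode (C : Set (ι → F)) (x - r) = 1
        ∧ ∀ r' ∈ R, r' ≠ r → distToCode (C : Set (ι → F)) (x - r') = 2)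
    ∨ (∀ r ∈ R, distToCode (C : Set (ι → F)) (x - r) = 2)
    ∨ (∀ r ∈ R, distToCode (C : Set (ι → F)) (x - r) = 3) := by
  by_cases h0 : ∃ r ∈ R, distToCode (C : Set (ι → F)) (x - r) = 0
  · obtain ⟨r, hr, hr0⟩ := h0
    refine Or.inl ⟨r, hr, hr0, fun r' hr' hne => ?_⟩
    rw [dtc_congr C (show (x - r') - (r - r') ∈ C by
      rw [show (x - r') - (r - r') = x - r by abel]
      exact (dtc_eq_zero_iff (⟨0, zero_mem C⟩) (x - r)).mp hr0)]
    exact hR3 r hr r' hr' (fun hrr => hne (hrr ▸ rfl))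
  by_cases h3 : ∃ r ∈ R, distToCode (C : Set (ι → F)) (x - r) = 3
  · obtain ⟨r, hr, hr3⟩ := h3
    refine Or.inr (Or.inr (Or.inr (fun r'' hr'' => ?_)))
    by_cases hne : r'' = r
    · rwa [hne]
    · have h33 := hR3 r'' hr'' r hr hne
      have := h.antip hr3 h33
      rw [show (x - r) - (r'' - r) = x - r'' by abel] at this
      rcases this with h' | h'
      · exact absurd ⟨r'', hr'', h'⟩ h0
      · exact h'
  by_cases h1 : ∃ r ∈ R, distToCode (C : Set (ι → F)) (x - r) = 1
  · obtain ⟨r, hr, hr1⟩ := h1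
    refine Or.inr (Or.inl ⟨r, hr, hr1, fun r' hr' hne => ?_⟩)
    exact h.match1 hr1 (hR3 r hr r' hr' (fun hrr => hne (hrr ▸ rfl)))
  · refine Or.inr (Or.inr (Or.inl (fun r hr => ?_)))
    have hle := h.hle (x - r)
    have e0 : distToCode (C : Set (ι → F)) (x - r) ≠ 0 := fun hc => h0 ⟨r, hr, hc⟩
    have e1 : distToCode (C : Set (ι → F)) (x - r) ≠ 1 := fun hc => h1 ⟨r, hr, hc⟩
    have e3 : distToCode (C : Set (ι → F)) (x - r) ≠ 3 := fun hc => h3 ⟨r, hr, hc⟩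
    omega

/-- determine the profile from the distance to `B` -/
lemma profile_of_DB (h : CRFacts C N q)
    (hR3 : ∀ r ∈ R, ∀ r' ∈ R, r ≠ r' → distToCode (C : Set (ι → F)) (r - r') = 3)
    (hRne : R.Nonempty) {x : ι → F} :
    (distToCode (BSet C R) x = 0 → ∃ r ∈ R, distToCode (C : Set (ι → F)) (x - r) = 0
        ∧ ∀ r' ∈ R, r' ≠ r → distToCode (C : Set (ι → F)) (x - r') = 3)
    ∧ (distToCode (BSet C R) x = 1 → ∃ r ∈ R, distToCode (C : Set (ι → F)) (x - r) = 1
        ∧ ∀ r' ∈ R, r' ≠ r → distToCode (C : Set (ι → F)) (x - r') = 2)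
    ∧ (distToCode (BSet C R) x = 2 → ∀ r ∈ R, distToCode (C : Set (ι → F)) (x - r) = 2)
    ∧ (distToCode (BSet C R) x = 3 → ∀ r ∈ R, distToCode (C : Set (ι → F)) (x - r) = 3) := by
  have hDB : ∀ j : ℕ,
      ((∃ r ∈ R, distToCode (C : Set (ι → F)) (x - r) = 0
        ∧ ∀ r' ∈ R, r' ≠ r → distToCode (C : Set (ι → F)) (x - r') = 3)
          → distToCode (BSet C R) x = 0)
      ∧ ((∃ r ∈ R, distToCode (C : Set (ι → F)) (x - r) = 1
        ∧ ∀ r' ∈ R, r' ≠ r → distToCode (C : Set (ι → F)) (x - r') = 2)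
          → distToCode (BSet C R) x = 1)
      ∧ ((∀ r ∈ R, distToCode (C : Set (ι → F)) (x - r) = 2)
          → distToCode (BSet C R) x = 2)
      ∧ ((∀ r ∈ R, distToCode (C : Set (ι → F)) (x - r) = 3)
          → distToCode (BSet C R) x = 3) := by
    intro _
    refine ⟨?_, ?_, ?_, ?_⟩
    · rintro ⟨r, hr, h0, _⟩
      exact DB_eq hRne ⟨r, hr, h0⟩ (fun r' hr' => Nat.zero_le _)
    · rintro ⟨r, hr, h1, hoth⟩
      refine DB_eq hRne ⟨r, hr, h1⟩ (fun r' hr' => ?_)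
      by_cases hne : r' = r
      · rw [hne, h1]
      · rw [hoth r' hr' hne]; omega
    · intro hall
      obtain ⟨r, hr⟩ := hRne
      exact DB_eq ⟨r, hr⟩ ⟨r, hr, hall r hr⟩ (fun r' hr' => (hall r' hr').ge)
    · intro hall
      obtain ⟨r, hr⟩ := hRne
      exact DB_eq ⟨r, hr⟩ ⟨r, hr, hall r hr⟩ (fun r' hr' => (hall r' hr').ge)
  obtain ⟨d0, d1, d2, d3⟩ := hDB 0
  refine ⟨?_, ?_, ?_, ?_⟩ <;> intro hx <;>
    rcases profile h hR3 x with hp | hp | hp | hp <;>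
      first
      | exact hp
      | (exfalso; first
          | (have := d0 hp; omega)
          | (have := d1 hp; omega)
          | (have := d2 hp; omega)
          | (have := d3 hp; omega))

end Profiles
section Counts

variable {F ι : Type*} [Fintype ι] [DecidableEq ι] [DecidableEq F] [Fintype F] [AddCommGroup F]
variable {C : AddSubgroup (ι → F)} {N q : ℕ} {R : Finset (ι → F)}

lemma lip1 {x y r : ι → F} (hd : hammingDist x y = 1) :
    distToCode (C : Set (ι → F)) (y - r) ≤ distToCode (C : Set (ι → F)) (x - r) + 1 := by
  have := dtc_lipschitz (⟨0, zero_mem C⟩ : (C : Set (ι → F)).Nonempty) (x - r) (y - r)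
  rwa [hammingDist_sub_right, hd] at this

lemma lip1' {x y r : ι → F} (hd : hammingDist x y = 1) :
    distToCode (C : Set (ι → F)) (x - r) ≤ distToCode (C : Set (ι → F)) (y - r) + 1 :=
  lip1 (by rwa [hammingDist_comm])

/-- case `i = 0` -/
lemma count0 (h : CRFacts C N q)
    (hR3 : ∀ r ∈ R, ∀ r' ∈ R, r ≠ r' → distToCode (C : Set (ι → F)) (r - r') = 3)
    {x r0 : ι → F} (hr0 : r0 ∈ R)
    (h0 : distToCode (C : Set (ι → F)) (x - r0) = 0)
    (hoth : ∀ r' ∈ R, r' ≠ r0 → distToCode (C : Set (ι → F)) (x - r') = 3) :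
    {y | hammingDist x y = 1 ∧ distToCode (BSet C R) y = 1}.ncard = N - 1 := by
  have hRne : R.Nonempty := ⟨r0, hr0⟩
  have hset : {y | hammingDist x y = 1 ∧ distToCode (BSet C R) y = 1}
      = {y | hammingDist x y = 1 ∧ distToCode (C : Set (ι → F)) (y - r0) = 1} := by
    ext y
    simp only [Set.mem_setOf_eq, and_congr_right_iff]
    intro hd
    constructor
    · intro hDB
      have hle1 : distToCode (C : Set (ι → F)) (y - r0) ≤ 1 := by
        have := lip1 (C := C) (r := r0) hd; omega
      have hne0 : distToCode (C : Set (ι → F)) (y - r0) ≠ 0 := by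
        intro hz
        have := ((profile_of_DB h hR3 hRne (x := y)).2.1) hDB
        obtain ⟨r, hr, hr1, hothy⟩ := this
        by_cases hrr : r = r0
        · rw [hrr, hz] at hr1; omega
        · have := hothy r0 hr0 (fun hc => hrr hc.symm)
          · rw [this] at hz; omega
      omega
    · intro h1
      refine DB_eq hRne ⟨r0, hr0, h1⟩ (fun r hr => ?_)
      by_cases hrr : r = r0
      · rw [hrr, h1]
      · have hx3 := hoth r hr hrr
        have := lip1 (C := C) (r := r) hd
        have := lip1' (C := C) (r := r) hd
        omega
  rw [hset, ncard_shift x r0 (fun z => distToCode (C : Set (ι → F)) z = 1), h.hb0 _ h0]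

/-- case `i = 3` -/
lemma count3 (h : CRFacts C N q)
    {x r0 : ι → F} (hr0 : r0 ∈ R)
    (hall : ∀ r ∈ R, distToCode (C : Set (ι → F)) (x - r) = 3) :
    {y | hammingDist x y = 1 ∧ distToCode (BSet C R) y = 2}.ncard = N - 1 := by
  have hRne : R.Nonempty := ⟨r0, hr0⟩
  have hset : {y | hammingDist x y = 1 ∧ distToCode (BSet C R) y = 2}
      = {y | hammingDist x y = 1 ∧ distToCode (C : Set (ι → F)) (y - r0) = 2} := by
    ext y
    simp only [Set.mem_setOf_eq, and_congr_right_iff]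
    intro hd
    have hall2 : ∀ r ∈ R, distToCode (C : Set (ι → F)) (y - r) = 2 := by
      intro r hr
      refine h.factA (hall r hr) ?_
      rwa [hammingDist_sub_right]
    constructor
    · intro _; exact hall2 r0 hr0
    · intro _; exact DB_eq hRne ⟨r0, hr0, hall2 r0 hr0⟩ (fun r hr => (hall2 r hr).ge)
  rw [hset, ncard_shift x r0 (fun z => distToCode (C : Set (ι → F)) z = 2), h.hc3 _ (hall r0 hr0)]

/-- case `i = 1`, count of `c` type -/
lemma count1c (h : CRFacts C N q)
    {x r0 : ι → F} (hr0 : r0 ∈ R)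
    (h1 : distToCode (C : Set (ι → F)) (x - r0) = 1)
    (hoth : ∀ r' ∈ R, r' ≠ r0 → distToCode (C : Set (ι → F)) (x - r') = 2) :
    {y | hammingDist x y = 1 ∧ distToCode (BSet C R) y = 0}.ncard = 1 := by
  have hRne : R.Nonempty := ⟨r0, hr0⟩
  have hset : {y | hammingDist x y = 1 ∧ distToCode (BSet C R) y = 0}
      = {y | hammingDist x y = 1 ∧ distToCode (C : Set (ι → F)) (y - r0) = 0} := by
    ext y
    simp only [Set.mem_setOf_eq, and_congr_right_iff]
    intro hd
    constructor
    · intro hDB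
      obtain ⟨r, hr, hz⟩ := (DB_le_iff hRne).mp (le_of_eq hDB)
      by_cases hrr : r = r0
      · rw [hrr] at hz; omega
      · exfalso
        have := hoth r hr hrr
        have := lip1' (C := C) (r := r) hd
        omega
    · intro hz
      exact Nat.le_zero.mp ((DB_le_iff hRne).mpr ⟨r0, hr0, hz.le⟩)
  rw [hset, ncard_shift x r0 (fun z => distToCode (C : Set (ι → F)) z = 0), h.hc1 _ h1]

/-- case `i = 1`, count of `b` type -/
lemma count1b (h : CRFacts C N q)
    (hR3 : ∀ r ∈ R, ∀ r' ∈ R, r ≠ r' → distToCode (C : Set (ι → F)) (r - r') = 3)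
    (hkq : R.card * q ≤ N)
    {x r0 : ι → F} (hr0 : r0 ∈ R)
    (h1 : distToCode (C : Set (ι → F)) (x - r0) = 1)
    (hoth : ∀ r' ∈ R, r' ≠ r0 → distToCode (C : Set (ι → F)) (x - r') = 2) :
    {y | hammingDist x y = 1 ∧ distToCode (BSet C R) y = 2}.ncard = N - R.card * q := by
  have hRne : R.Nonempty := ⟨r0, hr0⟩
  set A := {y | hammingDist x y = 1 ∧ distToCode (C : Set (ι → F)) (y - r0) = 2} with hA
  set U := ⋃ r ∈ R.erase r0, {y | hammingDist x y = 1 ∧ distToCode (C : Set (ι → F)) (y - r) = 1}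
    with hU
  have hUsub : U ⊆ A := by
    rintro y hy
    rw [hU, Set.mem_iUnion₂] at hy
    obtain ⟨r, hr, hd, hy1⟩ := hy
    have hrne : r ≠ r0 := (Finset.mem_erase.mp hr).1
    refine ⟨hd, ?_⟩
    exact h.match1 hy1 (hR3 r (Finset.mem_of_mem_erase hr) r0 hr0 hrne)
  have hset : {y | hammingDist x y = 1 ∧ distToCode (BSet C R) y = 2} = A \ U := by
    ext y
    constructor
    · rintro ⟨hd, hDB⟩
      have hall := ((profile_of_DB h hR3 hRne (x := y)).2.2.1) hDB
      refine ⟨⟨hd, hall r0 hr0⟩, ?_⟩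
      rw [hU, Set.mem_iUnion₂]
      rintro ⟨r, hr, _, hy1⟩
      rw [hall r (Finset.mem_of_mem_erase hr)] at hy1; omega
    · rintro ⟨⟨hd, hy2⟩, hyU⟩
      refine ⟨hd, ?_⟩
      rcases profile h hR3 y with hp | hp | hp | hp
      · exfalso
        obtain ⟨r, hr, hz, hothy⟩ := hp
        by_cases hrr : r = r0
        · rw [hrr] at hz; omega
        · have := hothy r0 hr0 (fun hc => hrr hc.symm)
          rw [this] at hy2; omega
      · exfalso
        obtain ⟨r, hr, hz, hothy⟩ := hp
        by_cases hrr : r = r0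
        · rw [hrr] at hz; omega
        · apply hyU
          rw [hU, Set.mem_iUnion₂]
          exact ⟨r, Finset.mem_erase.mpr ⟨hrr, hr⟩, hd, hz⟩
      · exact DB_eq hRne ⟨r0, hr0, hp r0 hr0⟩ (fun r hr => (hp r hr).ge)
      · exfalso
        rw [hp r0 hr0] at hy2; omega
  have hAcard : A.ncard = N - q := by
    rw [hA, ncard_shift x r0 (fun z => distToCode (C : Set (ι → F)) z = 2), h.hb1 _ h1]
  have hUcard : U.ncard = (R.card - 1) * q := by
    rw [hU, ncard_biUnion_disjoint]
    · rw [Finset.sum_congr rfl (fun r hr => ?_), Finset.sum_const, smul_eq_mul,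
        Finset.card_erase_of_mem hr0, mul_comm]
      rw [ncard_shift x r (fun z => distToCode (C : Set (ι → F)) z = 1)]
      exact h.hc2 _ (hoth r (Finset.mem_of_mem_erase hr) (Finset.mem_erase.mp hr).1)
    · intro a ha b hb hab
      rw [Set.disjoint_left]
      rintro y ⟨hd, hya⟩ ⟨_, hyb⟩
      have := h.match1 hya (hR3 a (Finset.mem_of_mem_erase ha) b (Finset.mem_of_mem_erase hb) hab)
      rw [this] at hyb; omega
  rw [hset, Set.ncard_diff hUsub (Set.toFinite _), hAcard, hUcard]
  have hq0 : 1 ≤ R.card := hRne.card_pos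
  have : (R.card - 1) * q = R.card * q - q := by
    rw [Nat.sub_mul, one_mul]
  rw [this]
  have hq2 := h.hq2
  have : q ≤ R.card * q := Nat.le_mul_of_pos_left q hq0
  omega

/-- case `i = 2`, count of `c` type -/
lemma count2c (h : CRFacts C N q)
    (hR3 : ∀ r ∈ R, ∀ r' ∈ R, r ≠ r' → distToCode (C : Set (ι → F)) (r - r') = 3)
    (hRne : R.Nonempty) {x : ι → F}
    (hall : ∀ r ∈ R, distToCode (C : Set (ι → F)) (x - r) = 2) :
    {y | hammingDist x y = 1 ∧ distToCode (BSet C R) y = 1}.ncard = R.card * q := by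
  have hset : {y | hammingDist x y = 1 ∧ distToCode (BSet C R) y = 1}
      = ⋃ r ∈ R, {y | hammingDist x y = 1 ∧ distToCode (C : Set (ι → F)) (y - r) = 1} := by
    ext y
    constructor
    · rintro ⟨hd, hDB⟩
      obtain ⟨r, hr, hr1, _⟩ := ((profile_of_DB h hR3 hRne (x := y)).2.1) hDB
      exact Set.mem_iUnion₂.mpr ⟨r, hr, hd, hr1⟩
    · intro hy
      obtain ⟨r, hr, hd, hy1⟩ := Set.mem_iUnion₂.mp hy
      refine ⟨hd, DB_eq hRne ⟨r, hr, hy1⟩ (fun r' hr' => ?_)⟩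
      have := hall r' hr'
      have := lip1' (C := C) (r := r') hd
      omega
  rw [hset, ncard_biUnion_disjoint]
  · rw [Finset.sum_congr rfl (fun r hr => ?_), Finset.sum_const, smul_eq_mul]
    rw [ncard_shift x r (fun z => distToCode (C : Set (ι → F)) z = 1)]
    exact h.hc2 _ (hall r hr)
  · intro a ha b hb hab
    rw [Set.disjoint_left]
    rintro y ⟨hd, hya⟩ ⟨_, hyb⟩
    have := h.match1 hya (hR3 a ha b hb hab)
    rw [this] at hyb; omega

/-- case `i = 2`, count of `b` type -/
lemma count2b (h : CRFacts C N q)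
    (hR3 : ∀ r ∈ R, ∀ r' ∈ R, r ≠ r' → distToCode (C : Set (ι → F)) (r - r') = 3)
    {x r0 : ι → F} (hr0 : r0 ∈ R)
    (hall : ∀ r ∈ R, distToCode (C : Set (ι → F)) (x - r) = 2) :
    {y | hammingDist x y = 1 ∧ distToCode (BSet C R) y = 3}.ncard = 1 := by
  have hRne : R.Nonempty := ⟨r0, hr0⟩
  have hset : {y | hammingDist x y = 1 ∧ distToCode (BSet C R) y = 3}
      = {y | hammingDist x y = 1 ∧ distToCode (C : Set (ι → F)) (y - r0) = 3} := by
    ext y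
    simp only [Set.mem_setOf_eq, and_congr_right_iff]
    intro hd
    constructor
    · intro hDB
      exact ((profile_of_DB h hR3 hRne (x := y)).2.2.2) hDB r0 hr0
    · intro hy3
      have hall3 : ∀ r ∈ R, distToCode (C : Set (ι → F)) (y - r) = 3 := by
        intro r hr
        by_cases hrr : r = r0
        · rwa [hrr]
        · have := h.antip hy3 (hR3 r hr r0 hr0 hrr)
          rw [show (y - r0) - (r - r0) = y - r by abel] at this
          rcases this with h' | h'
          · exfalso
            have := hall r hr
            have := lip1 (C := C) (r := r) hd
            have := lip1' (C := C) (r := r) hd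
            omega
          · exact h'
      exact DB_eq hRne ⟨r0, hr0, hall3 r0 hr0⟩ (fun r hr => (hall3 r hr).ge)
  rw [hset, ncard_shift x r0 (fun z => distToCode (C : Set (ι → F)) z = 3), h.hb2 _ (hall r0 hr0)]

end Counts
section Core

variable {F ι : Type*} [Fintype ι] [DecidableEq ι] [DecidableEq F] [Fintype F] [AddCommGroup F]
variable {C : AddSubgroup (ι → F)} {N q : ℕ} {R : Finset (ι → F)}

theorem coreCR (h : CRFacts C N q)
    (hR3 : ∀ r ∈ R, ∀ r' ∈ R, r ≠ r' → distToCode (C : Set (ι → F)) (r - r') = 3)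
    (hRne : R.Nonempty) (hkq : R.card * q ≤ N)
    (hz : ∃ z, ∀ r ∈ R, distToCode (C : Set (ι → F)) (z - r) = 3) :
    IsCompletelyRegular (BSet C R) 3
      (fun i => if i = 0 then N - 1 else if i = 1 then N - R.card * q else 1)
      (fun i => if i = 1 then 1 else if i = 2 then R.card * q else N - 1) := by
  obtain ⟨r1, hr1⟩ := hRne
  refine ⟨?_, ?_, ?_⟩
  · intro x
    exact (DB_le_iff ⟨r1, hr1⟩).mpr ⟨r1, hr1, h.hle _⟩
  · obtain ⟨z, hz3⟩ := hz
    exact ⟨z, DB_eq ⟨r1, hr1⟩ ⟨r1, hr1, hz3 r1 hr1⟩ (fun r hr => (hz3 r hr).ge)⟩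
  · intro i hi x hx
    rcases profile h hR3 x with ⟨r0, hr0, h0, hoth⟩ | ⟨r0, hr0, h1, hoth⟩ | hall | hall
    · have hDB : distToCode (BSet C R) x = 0 :=
        DB_eq ⟨r0, hr0⟩ ⟨r0, hr0, h0⟩ (fun _ _ => Nat.zero_le _)
      rw [hx] at hDB
      subst hDB
      refine ⟨fun _ => ?_, fun hc => by omega⟩
      simp only [if_pos rfl]
      exact count0 h hR3 hr0 h0 hoth
    · have hDB : distToCode (BSet C R) x = 1 := by
        refine DB_eq ⟨r0, hr0⟩ ⟨r0, hr0, h1⟩ (fun r hr => ?_)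
        by_cases hrr : r = r0
        · rw [hrr, h1]
        · rw [hoth r hr hrr]; omega
      rw [hx] at hDB
      subst hDB
      constructor
      · intro _
        simp only [Nat.one_ne_zero, if_false, if_pos rfl]
        exact count1b h hR3 hkq hr0 h1 hoth
      · intro _
        simp only [if_pos rfl]
        exact count1c h hr0 h1 hoth
    · have hDB : distToCode (BSet C R) x = 2 :=
        DB_eq ⟨r1, hr1⟩ ⟨r1, hr1, hall r1 hr1⟩ (fun r hr => (hall r hr).ge)
      rw [hx] at hDB
      subst hDB
      constructor
      · intro _
        simpa using count2b h hR3 hr1 hall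
      · intro _
        simpa using count2c h hR3 ⟨r1, hr1⟩ hall
    · have hDB : distToCode (BSet C R) x = 3 :=
        DB_eq ⟨r1, hr1⟩ ⟨r1, hr1, hall r1 hr1⟩ (fun r hr => (hall r hr).ge)
      rw [hx] at hDB
      subst hDB
      refine ⟨fun hc => by omega, fun _ => ?_⟩
      simpa using count3 h hr1 hall
end Core
section DoubleCount

variable {V : Type*} [Fintype V]

lemma ncard_filter_eq (T : V → Prop) [DecidablePred T] :
    {y | T y}.ncard = (Finset.univ.filter (fun y => T y)).card := by
  rw [Set.ncard_eq_toFinset_card', Set.toFinset_setOf]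

lemma double_count (dd : V → V → ℕ) (hdd : ∀ x y, dd x y = dd y x)
    (P Q : V → Prop) (bP cQ : ℕ)
    (hP : ∀ x, P x → {y | dd x y = 1 ∧ Q y}.ncard = bP)
    (hQ : ∀ y, Q y → {x | dd y x = 1 ∧ P x}.ncard = cQ) :
    {x | P x}.ncard * bP = {y | Q y}.ncard * cQ := by
  classical
  have key : ∀ (P' Q' : V → Prop) (b' : ℕ),
      (∀ x, P' x → {y | dd x y = 1 ∧ Q' y}.ncard = b') →
      (Finset.univ.filter (fun x => P' x)).card * b'
        = ∑ x ∈ Finset.univ, ∑ y ∈ Finset.univ,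
            if P' x ∧ Q' y ∧ dd x y = 1 then 1 else 0 := by
    intro P' Q' b' hbP
    rw [Finset.card_eq_sum_ones, Finset.sum_mul, one_mul]
    rw [Finset.sum_filter]
    apply Finset.sum_congr rfl
    intro x _
    by_cases hx : P' x
    · rw [if_pos hx, ← hbP x hx, ncard_filter_eq, Finset.card_eq_sum_ones, Finset.sum_filter]
      apply Finset.sum_congr rfl
      intro y _
      by_cases hy : dd x y = 1 ∧ Q' y
      · rw [if_pos hy, if_pos ⟨hx, hy.2, hy.1⟩]
      · rw [if_neg hy, if_neg (fun hc => hy ⟨hc.2.2, hc.2.1⟩)]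
    · rw [if_neg hx]
      symm
      apply Finset.sum_eq_zero
      intro y _
      rw [if_neg (fun hc => hx hc.1)]
  rw [ncard_filter_eq P, ncard_filter_eq Q, key P Q bP hP, key Q P cQ hQ]
  rw [Finset.sum_comm]
  apply Finset.sum_congr rfl
  intro x _
  apply Finset.sum_congr rfl
  intro y _
  congr 1
  rw [hdd y x]
  exact propext ⟨fun h => ⟨h.2.1, h.1, h.2.2⟩, fun h => ⟨h.2.1, h.1, h.2.2⟩⟩

end DoubleCount

section Greedy

variable {F ι : Type*} [Fintype ι] [DecidableEq ι] [DecidableEq F] [Fintype F] [AddCommGroup F]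

lemma greedy (C : AddSubgroup (ι → F)) (Z : Set (ι → F)) :
    ∀ j : ℕ, j * (C : Set (ι → F)).ncard ≤ Z.ncard →
    ∃ R : Finset (ι → F), R.card = j ∧ ↑R ⊆ Z ∧
      (∀ x ∈ R, ∀ y ∈ R, x ≠ y → x - y ∉ C) := by
  intro j
  induction j with
  | zero => intro _; exact ⟨∅, by simp, by simp, by simp⟩
  | succ j ih =>
    intro hsize
    have hCn : 1 ≤ (C : Set (ι → F)).ncard := by
      rw [Nat.one_le_iff_ne_zero]
      intro hc
      rw [Set.ncard_eq_zero (Set.toFinite _)] at hc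
      exact (Set.eq_empty_iff_forall_notMem.mp hc) 0 (zero_mem C)
    obtain ⟨R, hcard, hsub, hpair⟩ := ih (le_trans (by nlinarith) hsize)
    set U := ⋃ r ∈ R, (fun v => r + v) '' (C : Set (ι → F)) with hUdef
    have hUcard : U.ncard ≤ j * (C : Set (ι → F)).ncard := by
      refine le_trans (ncard_biUnion_le R _) ?_
      rw [← hcard, Finset.card_eq_sum_ones, Finset.sum_mul, one_mul]
      apply Finset.sum_le_sum
      intro r _
      rw [Set.ncard_image_of_injective _ (add_right_injective r)]
    have hlt : U.ncard < Z.ncard := by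
      have : (j + 1) * (C : Set (ι → F)).ncard = j * (C : Set (ι → F)).ncard
          + (C : Set (ι → F)).ncard := by ring
      omega
    obtain ⟨z, hzZ, hzU⟩ : ∃ z, z ∈ Z ∧ z ∉ U := by
      by_contra hc
      push_neg at hc
      exact absurd (Set.ncard_le_ncard (fun z hz => hc z hz) (Set.toFinite _)) (by omega)
    have hzR : z ∉ R := by
      intro hzR
      exact hzU (Set.mem_iUnion₂.mpr ⟨z, hzR, 0, zero_mem C, by simp⟩)
    refine ⟨insert z R, by rw [Finset.card_insert_of_notMem hzR, hcard], ?_, ?_⟩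
    · intro a ha
      rcases Finset.mem_insert.mp ha with rfl | ha
      · exact hzZ
      · exact hsub ha
    · have hz1 : ∀ r ∈ R, z - r ∉ C := by
        intro r hr hmem
        exact hzU (Set.mem_iUnion₂.mpr ⟨r, hr, z - r, hmem, by show r + (z - r) = z; abel⟩)
      have hz2 : ∀ r ∈ R, r - z ∉ C := by
        intro r hr hmem
        exact hz1 r hr (by simpa using neg_mem hmem)
      intro a ha b hb hab
      rcases Finset.mem_insert.mp ha with rfl | ha'
      · rcases Finset.mem_insert.mp hb with rfl | hb'
        · exact absurd rfl hab
        · exact hz1 b hb'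
      · rcases Finset.mem_insert.mp hb with rfl | hb'
        · exact hz2 a ha'
        · exact hpair a ha' b hb' hab
end Greedy
section Fibre

variable {F ι : Type*} [Fintype ι] [DecidableEq ι] [DecidableEq F] [Fintype F] [AddCommGroup F]
variable {C : AddSubgroup (ι → F)} {N q : ℕ}

lemma zdist (h : CRFacts C N q) {a b : ι → F}
    (ha : distToCode (C : Set (ι → F)) a = 0 ∨ distToCode (C : Set (ι → F)) a = 3)
    (hb : distToCode (C : Set (ι → F)) b = 0 ∨ distToCode (C : Set (ι → F)) b = 3)
    (hne : a - b ∉ C) : distToCode (C : Set (ι → F)) (a - b) = 3 := by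
  have hCne : (C : Set (ι → F)).Nonempty := ⟨0, zero_mem C⟩
  rcases ha with ha | ha <;> rcases hb with hb | hb
  · exact absurd (sub_mem ((dtc_eq_zero_iff hCne a).mp ha) ((dtc_eq_zero_iff hCne b).mp hb)) hne
  · rw [dtc_congr C (show (a - b) - (-b) ∈ C by
      simpa using (dtc_eq_zero_iff hCne a).mp ha), dtc_neg']
    exact hb
  · rw [dtc_congr C (show (a - b) - a ∈ C by
      simpa using neg_mem ((dtc_eq_zero_iff hCne b).mp hb))]
    exact ha
  · rcases h.antip ha hb with h' | h'
    · exact absurd ((dtc_eq_zero_iff hCne (a - b)).mp h') hne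
    · exact h'

lemma fibre_count (h : CRFacts C N q) :
    {x : ι → F | distToCode (C : Set (ι → F)) x = 0
      ∨ distToCode (C : Set (ι → F)) x = 3}.ncard * q
    = (C : Set (ι → F)).ncard * N := by
  have hCne : (C : Set (ι → F)).Nonempty := ⟨0, zero_mem C⟩
  have e1 := double_count hammingDist hammingDist_comm
    (fun x => distToCode (C : Set (ι → F)) x = 0)
    (fun y => distToCode (C : Set (ι → F)) y = 1) (N - 1) 1 h.hb0 h.hc1
  have e2 := double_count hammingDist hammingDist_comm
    (fun x => distToCode (C : Set (ι → F)) x = 1)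
    (fun y => distToCode (C : Set (ι → F)) y = 2) (N - q) q h.hb1 h.hc2
  have e3 := double_count hammingDist hammingDist_comm
    (fun x => distToCode (C : Set (ι → F)) x = 2)
    (fun y => distToCode (C : Set (ι → F)) y = 3) 1 (N - 1)
    h.hb2 (fun y hy => h.hc3 y hy)
  set A0 := {x : ι → F | distToCode (C : Set (ι → F)) x = 0}.ncard with hA0
  set A1 := {x : ι → F | distToCode (C : Set (ι → F)) x = 1}.ncard with hA1
  set A2 := {x : ι → F | distToCode (C : Set (ι → F)) x = 2}.ncard with hA2
  set A3 := {x : ι → F | distToCode (C : Set (ι → F)) x = 3}.ncard with hA3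
  simp only [mul_one] at e1 e2 e3
  -- A3 * q = A0 * (N - q)
  have hN1 : 1 ≤ N - 1 := by have := h.hqN; have := h.hq2; omega
  have key : A3 * q = A0 * (N - q) := by
    have h1 : A3 * q * (N - 1) = A0 * (N - q) * (N - 1) := by
      calc A3 * q * (N - 1) = A3 * (N - 1) * q := by ring
        _ = A2 * q := by rw [← e3]
        _ = A1 * (N - q) := by rw [← e2]
        _ = A0 * (N - 1) * (N - q) := by rw [← e1]
        _ = A0 * (N - q) * (N - 1) := by ring
    exact Nat.eq_of_mul_eq_mul_right (by omega) h1
  have hsplit : {x : ι → F | distToCode (C : Set (ι → F)) x = 0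
      ∨ distToCode (C : Set (ι → F)) x = 3}.ncard = A0 + A3 := by
    rw [show {x : ι → F | distToCode (C : Set (ι → F)) x = 0
        ∨ distToCode (C : Set (ι → F)) x = 3}
      = {x : ι → F | distToCode (C : Set (ι → F)) x = 0}
        ∪ {x : ι → F | distToCode (C : Set (ι → F)) x = 3} from rfl]
    rw [Set.ncard_union_eq ?_ (Set.toFinite _) (Set.toFinite _)]
    rw [Set.disjoint_left]
    rintro x hx0 hx3
    simp only [Set.mem_setOf_eq] at hx0 hx3
    omega
  have hC0 : A0 = (C : Set (ι → F)).ncard := by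
    rw [hA0]
    congr 1
    ext x
    simp only [Set.mem_setOf_eq]
    exact dtc_eq_zero_iff hCne x
  rw [hsplit, add_mul, key, hC0]
  have := h.hqN
  have hqN' : q ≤ N := by omega
  rw [← Nat.mul_add, Nat.add_sub_cancel' hqN']

end Fibre

/-- Let `p`, `q` be powers of 2 with `q ≤ p^{2m}`, `n = (p^{2m}−1)/(p−1)`,
and let `C ⊆ F_p^n` be an additive code which is completely regular with covering radius 3
and intersection array `{p^{2m}−1, p^{2m}−q, 1; 1, q, p^{2m}−1}`.  Then for every `k` with
`1 ≤ k ≤ p^{2m}/q − 1` there is a set `B_k ⊆ F_p^n` which is a union of exactly `k`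
(pairwise distinct) cosets of `C` and is completely regular with covering radius 3 and
intersection array `{p^{2m}−1, p^{2m}−kq, 1; 1, kq, p^{2m}−1}`. -/
theorem stmt_17 (p q m n : ℕ)
    (hp : ∃ s, 1 ≤ s ∧ p = 2 ^ s) (hq : ∃ s, 1 ≤ s ∧ q = 2 ^ s)
    (hqle : q ≤ p ^ (2 * m)) (hn : n = (p ^ (2 * m) - 1) / (p - 1))
    (F : Type) [Field F] [Fintype F] [DecidableEq F] (hcF : Fintype.card F = p)
    (C : AddSubgroup (Fin n → F))
    (hCR : IsCompletelyRegular (C : Set (Fin n → F)) 3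
      (fun i => if i = 0 then p ^ (2 * m) - 1 else if i = 1 then p ^ (2 * m) - q else 1)
      (fun i => if i = 1 then 1 else if i = 2 then q else p ^ (2 * m) - 1)) :
    ∀ k : ℕ, 1 ≤ k → k ≤ p ^ (2 * m) / q - 1 →
      ∃ (B : Set (Fin n → F)) (R : Finset (Fin n → F)),
        R.card = k ∧
        (∀ x ∈ R, ∀ y ∈ R, x ≠ y → x - y ∉ C) ∧
        B = ⋃ x ∈ R, (fun v => x + v) '' (C : Set (Fin n → F)) ∧
        IsCompletelyRegular B 3
          (fun i => if i = 0 then p ^ (2 * m) - 1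
                    else if i = 1 then p ^ (2 * m) - k * q else 1)
          (fun i => if i = 1 then 1 else if i = 2 then k * q else p ^ (2 * m) - 1) := by
  intro k hk1 hk2
  set N := p ^ (2 * m) with hN
  -- basic arithmetic facts
  have hq2 : 2 ≤ q := by
    obtain ⟨t, ht1, rfl⟩ := hq
    calc 2 = 2 ^ 1 := by norm_num
      _ ≤ 2 ^ t := Nat.pow_le_pow_right (by norm_num) ht1
  have hp2 : 2 ≤ p := by
    obtain ⟨s, hs1, rfl⟩ := hp
    calc 2 = 2 ^ 1 := by norm_num
      _ ≤ 2 ^ s := Nat.pow_le_pow_right (by norm_num) hs1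
  have hq0 : 0 < q := by omega
  have hqdvd : q ∣ N := by
    obtain ⟨s, hs1, rfl⟩ := hp
    obtain ⟨t, ht1, rfl⟩ := hq
    rw [hN, ← pow_mul]
    have hle' : t ≤ s * (2 * m) := by
      rw [hN, ← pow_mul] at hqle
      exact (Nat.pow_le_pow_iff_right (by norm_num : 1 < 2)).mp hqle
    exact pow_dvd_pow 2 hle'
  have hk1N : (k + 1) * q ≤ N := by
    have hdivge : 1 ≤ N / q := (Nat.one_le_div_iff hq0).mpr hqle
    have : k + 1 ≤ N / q := by omega
    calc (k + 1) * q ≤ (N / q) * q := Nat.mul_le_mul_right q this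
      _ = N := Nat.div_mul_cancel hqdvd
  have hqN : q + q ≤ N := by
    have : 2 * q ≤ (k + 1) * q := Nat.mul_le_mul_right q (by omega)
    omega
  have hn1 : n * (p - 1) = N - 1 := by
    have hdvd : p - 1 ∣ N - 1 := by
      simpa [hN] using Nat.sub_dvd_pow_sub_pow p 1 (2 * m)
    rw [hn]
    exact Nat.div_mul_cancel hdvd
  have hsph : ∀ x : Fin n → F, {y | hammingDist x y = 1}.ncard = N - 1 := by
    intro x
    rw [sphere_ncard x, Fintype.card_fin, hcF, hn1]
  -- extract the facts
  obtain ⟨hle, _hex, hcnt⟩ := hCR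
  have facts : CRFacts C N q := by
    refine ⟨hle, hsph, ?_, ?_, ?_, ?_, ?_, ?_, hq2, hqN⟩
    · intro x hx
      simpa using (hcnt 0 (by omega) x hx).1 (by omega)
    · intro x hx
      simpa using (hcnt 1 (by omega) x hx).1 (by omega)
    · intro x hx
      simpa using (hcnt 1 (by omega) x hx).2 (by omega)
    · intro x hx
      simpa using (hcnt 2 (by omega) x hx).1 (by omega)
    · intro x hx
      simpa using (hcnt 2 (by omega) x hx).2 (by omega)
    · intro x hx
      simpa using (hcnt 3 (by omega) x hx).2 (by omega)
  -- the fibre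
  set Z := {x : Fin n → F | distToCode (C : Set (Fin n → F)) x = 0
    ∨ distToCode (C : Set (Fin n → F)) x = 3} with hZ
  have hZq : Z.ncard * q = (C : Set (Fin n → F)).ncard * N := fibre_count facts
  have hCn1 : 1 ≤ (C : Set (Fin n → F)).ncard := by
    rw [Nat.one_le_iff_ne_zero]
    intro hc
    rw [Set.ncard_eq_zero (Set.toFinite _)] at hc
    exact (Set.eq_empty_iff_forall_notMem.mp hc) 0 (zero_mem C)
  have hZsize : (k + 1) * (C : Set (Fin n → F)).ncard ≤ Z.ncard := by
    have h1 : ((k + 1) * (C : Set (Fin n → F)).ncard) * q ≤ Z.ncard * q := by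
      calc ((k + 1) * (C : Set (Fin n → F)).ncard) * q
          = (C : Set (Fin n → F)).ncard * ((k + 1) * q) := by ring
        _ ≤ (C : Set (Fin n → F)).ncard * N := Nat.mul_le_mul_left _ hk1N
        _ = Z.ncard * q := hZq.symm
    exact Nat.le_of_mul_le_mul_right h1 hq0
  obtain ⟨R', hR'card, hR'sub, hR'pair⟩ := greedy C Z (k + 1) hZsize
  have hR'ne : R'.Nonempty := Finset.card_pos.mp (by omega)
  obtain ⟨z, hzmem⟩ := hR'ne
  set R := R'.erase z with hR
  have hRcard : R.card = k := by
    rw [hR, Finset.card_erase_of_mem hzmem, hR'card]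
    omega
  have hRsubR' : ∀ r ∈ R, r ∈ R' := fun r hr => Finset.mem_of_mem_erase hr
  have hRZ : ∀ r ∈ R, r ∈ Z := fun r hr => hR'sub (hRsubR' r hr)
  have hR3 : ∀ r ∈ R, ∀ r' ∈ R, r ≠ r' →
      distToCode (C : Set (Fin n → F)) (r - r') = 3 := by
    intro r hr r' hr' hne
    exact zdist facts (hRZ r hr) (hRZ r' hr')
      (hR'pair r (hRsubR' r hr) r' (hRsubR' r' hr') hne)
  have hRne : R.Nonempty := Finset.card_pos.mp (by omega)
  have hkq : R.card * q ≤ N := by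
    rw [hRcard]
    have : k * q ≤ (k + 1) * q := Nat.mul_le_mul_right q (by omega)
    omega
  have hzw : ∀ r ∈ R, distToCode (C : Set (Fin n → F)) (z - r) = 3 := by
    intro r hr
    refine zdist facts (hR'sub hzmem) (hRZ r hr) ?_
    exact hR'pair z hzmem r (hRsubR' r hr) (Finset.ne_of_mem_erase hr).symm
  have hmain := coreCR facts hR3 hRne hkq ⟨z, hzw⟩
  rw [hRcard] at hmain
  exact ⟨BSet C R, R, hRcard,
    fun x hx y hy hxy => hR'pair x (hRsubR' x hx) y (hRsubR' y hy) hxy, rfl, hmain⟩
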